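/- Let a > 0 with a ≠ 1. The group G_a = B_a ⋊_{α_a} ℤ has exponential growth with respect to the generating set S = {u, u⁻¹, v, v⁻¹}, where u = (0,1) and v = (1,0): there exist constants c > 1 and C > 0 such that for every n ∈ ℕ, the number of distinct elements of G_a expressible as a product of at most n elements of S is at least C·cⁿ. -/

import Mathlib

noncomputable section

/-- `B a` is the additive subgroup of `ℝ` generated by the integer powers of `a`
(all finite sums `∑ mᵢ a^{nᵢ}` with `mᵢ, nᵢ ∈ ℤ`). -/
def B (a : ℝ) : AddSubgroup ℝ := AddSubgroup.closure {x : ℝ | ∃ n : ℤ, x = a ^ n}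

lemma B.zpow_mul_mem {a : ℝ} (ha : a ≠ 0) (m : ℤ) {x : ℝ} (hx : x ∈ B a) :
    a ^ m * x ∈ B a := by
  have h : (B a).map (AddMonoidHom.mulLeft (a ^ m)) ≤ B a := by
    rw [B, AddMonoidHom.map_closure]
    refine (AddSubgroup.closure_le _).2 ?_
    rintro y ⟨x, ⟨n, rfl⟩, rfl⟩
    exact AddSubgroup.subset_closure ⟨m + n, (zpow_add₀ ha m n).symm⟩
  exact h (AddSubgroup.mem_map.2 ⟨x, hx, rfl⟩)

lemma one_mem_B (a : ℝ) : (1 : ℝ) ∈ B a :=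
  AddSubgroup.subset_closure ⟨0, (zpow_zero a).symm⟩

/-- Multiplication by `a` as an automorphism `α_a` of the additive group `B a`. -/
def alphaAut {a : ℝ} (ha : 0 < a) : AddAut ↥(B a) where
  toFun x := ⟨a * x, by simpa using B.zpow_mul_mem ha.ne' 1 x.2⟩
  invFun x := ⟨a⁻¹ * x, by simpa using B.zpow_mul_mem ha.ne' (-1) x.2⟩
  left_inv x := Subtype.ext (by have h := ha.ne'; field_simp)
  right_inv x := Subtype.ext (by have h := ha.ne'; field_simp)
  map_add' x y := Subtype.ext (by simp [mul_add])

/-- The action of `ℤ` on `B a` by powers of `α_a`. -/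
def phiHom {a : ℝ} (ha : 0 < a) :
    Multiplicative ℤ →* MulAut (Multiplicative ↥(B a)) :=
  zpowersHom _ (AddEquiv.toMultiplicative (alphaAut ha))

/-- The group `G_a = B_a ⋊_{α_a} ℤ`. -/
abbrev Gk {a : ℝ} (ha : 0 < a) :=
  SemidirectProduct (Multiplicative ↥(B a)) (Multiplicative ℤ) (phiHom ha)

/-- The generator `u = (0,1)` of `G_a`. -/
def uElt {a : ℝ} (ha : 0 < a) : Gk ha := ⟨1, Multiplicative.ofAdd 1⟩

/-- The generator `v = (1,0)` of `G_a`. -/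
def vElt {a : ℝ} (ha : 0 < a) : Gk ha :=
  ⟨Multiplicative.ofAdd ⟨(1 : ℝ), one_mem_B a⟩, 1⟩

/-!
Pick `m : ℤ` with `t = a ^ m ≥ 2` (possible since `a ≠ 1`). For a digit string `ε ∈ {0,1}ᴷ`
the word `∏ᵢ v^{εᵢ} u^m` has length at most `K (|m| + 1)`, and its `B_a`-coordinate is
`∑ᵢ εᵢ tⁱ`. Because `t ≥ 2`, distinct digit strings give coordinates at distance at least `1`,
so the ball of radius `K (|m| + 1)` has at least `2ᴷ` elements.
-/

open Multiplicative

section WordBall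

variable {G : Type*}

def wordBall [Monoid G] (S : Set G) (n : ℕ) : Set G :=
  {g | ∃ l : List G, l.length ≤ n ∧ (∀ x ∈ l, x ∈ S) ∧ l.prod = g}

variable [Monoid G] {S : Set G}

lemma wordBall_mono (S : Set G) : Monotone (wordBall S) := by
  rintro n k hnk g ⟨l, hl, hS, rfl⟩
  exact ⟨l, hl.trans hnk, hS, rfl⟩

lemma one_mem_wordBall (n : ℕ) : (1 : G) ∈ wordBall S n :=
  ⟨[], Nat.zero_le n, by simp, rfl⟩

lemma mul_mem_wordBall {g h : G} {n k : ℕ} (hg : g ∈ wordBall S n) (hh : h ∈ wordBall S k) :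
    g * h ∈ wordBall S (n + k) := by
  obtain ⟨l, hl, hlS, rfl⟩ := hg
  obtain ⟨l', hl', hl'S, rfl⟩ := hh
  refine ⟨l ++ l', by simp only [List.length_append]; omega, ?_, List.prod_append⟩
  simpa only [List.mem_append] using fun x hx => hx.elim (hlS x) (hl'S x)

lemma pow_mem_wordBall {s : G} (hs : s ∈ S) (d : ℕ) : s ^ d ∈ wordBall S d :=
  ⟨List.replicate d s, (List.length_replicate).le, fun _ hx => List.eq_of_mem_replicate hx ▸ hs,
    List.prod_replicate d s⟩

lemma List.prod_mem_wordBall {l : List G} {k : ℕ} (hl : ∀ x ∈ l, x ∈ wordBall S k) :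
    l.prod ∈ wordBall S (l.length * k) := by
  induction l with
  | nil => exact one_mem_wordBall _
  | cons x l ih =>
    rw [List.prod_cons, List.length_cons, Nat.succ_mul, add_comm]
    exact mul_mem_wordBall (hl x List.mem_cons_self)
      (ih fun y hy => hl y (List.mem_cons_of_mem x hy))

lemma Set.Finite.wordBall (hS : S.Finite) (n : ℕ) : (wordBall S n).Finite := by
  have := hS.to_subtype
  refine ((List.finite_length_le S n).image fun l => (l.map Subtype.val).prod).subset ?_
  rintro g ⟨l, hl, hlS, rfl⟩
  refine ⟨l.attach.map fun x => ⟨x.1, hlS x.1 x.2⟩, by simpa using hl, ?_⟩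
  simp [List.map_map, Function.comp_def]

end WordBall

lemma zpow_mem_wordBall {G : Type*} [Group G] {S : Set G} {s : G} (hs : s ∈ S) (hs' : s⁻¹ ∈ S)
    (m : ℤ) : s ^ m ∈ wordBall S m.natAbs := by
  obtain ⟨k, rfl | rfl⟩ := Int.eq_nat_or_neg m
  · simpa using pow_mem_wordBall hs k
  · simpa [← inv_pow] using pow_mem_wordBall hs' k

section Digits

variable {R : Type*} [CommRing R] [LinearOrder R] [IsStrictOrderedRing R]

lemma Nat.one_le_abs_ofDigits_sub_ofDigits {b : ℕ} {t : R} (ht : (b : R) ≤ t) :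
    ∀ {L₁ L₂ : List ℕ}, L₁.length = L₂.length → (∀ d ∈ L₁, d < b) → (∀ d ∈ L₂, d < b) →
      L₁ ≠ L₂ → 1 ≤ |ofDigits t L₁ - ofDigits t L₂|
  | [], [], _, _, _, hne => (hne rfl).elim
  | d₁ :: L₁, d₂ :: L₂, hlen, h₁, h₂, hne => by
    have hd₁ : (d₁ : R) + 1 ≤ b := by exact_mod_cast h₁ d₁ List.mem_cons_self
    have hd₂ : (d₂ : R) + 1 ≤ b := by exact_mod_cast h₂ d₂ List.mem_cons_self
    rw [ofDigits, ofDigits,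
      show (d₁ : R) + t * ofDigits t L₁ - (d₂ + t * ofDigits t L₂) =
        (d₁ - d₂ : R) + t * (ofDigits t L₁ - ofDigits t L₂) by ring]
    -- if the tails differ, `|t * (tail difference)| ≥ t ≥ b` beats the digit difference `≤ b - 1`
    by_cases hL : L₁ = L₂
    · subst hL
      have hd : d₁ ≠ d₂ := fun h => hne (h ▸ rfl)
      rw [sub_self, mul_zero, add_zero, le_abs]
      rcases Nat.lt_or_gt_of_ne hd with h | h
      · right; linarith [show (d₁ : R) + 1 ≤ d₂ by exact_mod_cast h]
      · left; linarith [show (d₂ : R) + 1 ≤ d₁ by exact_mod_cast h]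
    · have ih := one_le_abs_ofDigits_sub_ofDigits ht (Nat.succ.inj hlen)
        (fun d hd => h₁ d (List.mem_cons_of_mem _ hd))
        (fun d hd => h₂ d (List.mem_cons_of_mem _ hd)) hL
      have hdiff : |(d₁ - d₂ : R)| ≤ b - 1 := by
        rw [abs_le]
        constructor <;> linarith [Nat.cast_nonneg (α := R) d₁, Nat.cast_nonneg (α := R) d₂]
      have ht0 : 0 ≤ t := le_trans (Nat.cast_nonneg b) ht
      calc (1 : R) ≤ t * 1 - (b - 1) := by linarith
        _ ≤ |t * (ofDigits t L₁ - ofDigits t L₂)| - |(d₁ - d₂ : R)| := by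
          rw [abs_mul, abs_of_nonneg ht0]; gcongr
        _ ≤ _ := by rw [add_comm]; exact abs_sub_abs_le_abs_add _ _

lemma Nat.ofDigits_ofFn_injective {b K : ℕ} {t : R} (ht : (b : R) ≤ t) :
    Function.Injective fun ε : Fin K → Fin b => ofDigits t (List.ofFn fun i => (ε i : ℕ)) := by
  intro ε δ h
  by_contra hne
  have hL : (List.ofFn fun i => (ε i : ℕ)) ≠ List.ofFn fun i => (δ i : ℕ) := fun hL =>
    hne (funext fun i => Fin.ext (congrFun (List.ofFn_injective hL) i))
  have := Nat.one_le_abs_ofDigits_sub_ofDigits ht (by simp) (by simp) (by simp) hL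
  simp only [h, sub_self, abs_zero] at this
  exact absurd this (by norm_num)

end Digits

lemma exists_pow_le_of_pow_div_le {f : ℕ → ℝ} {r : ℝ} (hr : 1 < r) {L : ℕ} (hL : 0 < L)
    (h : ∀ n, r ^ (n / L) ≤ f n) : ∃ c : ℝ, 1 < c ∧ ∃ C : ℝ, 0 < C ∧ ∀ n, C * c ^ n ≤ f n := by
  set c := r ^ (L⁻¹ : ℝ)
  have hc : 1 < c := Real.one_lt_rpow hr (by positivity)
  have hcL : c ^ L = r := Real.rpow_inv_natCast_pow (by linarith) hL.ne'
  refine ⟨c, hc, r⁻¹, by positivity, fun n => ?_⟩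
  have hrem : c ^ (n % L) ≤ r := hcL ▸ pow_le_pow_right₀ hc.le (Nat.mod_lt n hL).le
  calc r⁻¹ * c ^ n = r⁻¹ * (r ^ (n / L) * c ^ (n % L)) := by
        rw [← hcL, ← pow_mul, ← pow_add, Nat.div_add_mod]
    _ ≤ r⁻¹ * (r ^ (n / L) * r) := by gcongr
    _ = r ^ (n / L) := by field_simp
    _ ≤ f n := h n

lemma exists_le_zpow_of_ne_one {K : Type*} [Field K] [LinearOrder K] [IsStrictOrderedRing K]
    [Archimedean K] {a : K} (ha : 0 < a) (hne : a ≠ 1) (x : K) : ∃ m : ℤ, x ≤ a ^ m := by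
  rcases hne.lt_or_gt with h | h
  · obtain ⟨n, hn⟩ := pow_unbounded_of_one_lt x ((one_lt_inv₀ ha).2 h)
    exact ⟨-n, by rw [zpow_neg, zpow_natCast, ← inv_pow]; exact hn.le⟩
  · obtain ⟨n, hn⟩ := pow_unbounded_of_one_lt x h
    exact ⟨n, by rw [zpow_natCast]; exact hn.le⟩

section Gk

variable {a : ℝ} (ha : 0 < a)

lemma coe_phiHom_apply (k : ℤ) (x : Multiplicative (B a)) :
    ((toAdd (phiHom ha (ofAdd k) x) : B a) : ℝ) = a ^ k * (toAdd x : B a) := by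
  rw [phiHom, zpowersHom_apply, toAdd_ofAdd]
  induction k using Int.induction_on generalizing x with
  | zero => simp
  | succ k ih =>
    rw [zpow_add_one, MulAut.mul_apply, ih, zpow_add_one₀ ha.ne']
    show a ^ (k : ℤ) * (a * _) = _
    ring
  | pred k ih =>
    rw [zpow_sub_one, MulAut.mul_apply, ih, zpow_sub_one₀ ha.ne']
    show a ^ (-k : ℤ) * (a⁻¹ * _) = _
    ring

def bCoord (g : Gk ha) : ℝ := ((toAdd g.left : B a) : ℝ)

lemma bCoord_mul (g h : Gk ha) :
    bCoord ha (g * h) = bCoord ha g + a ^ toAdd g.right * bCoord ha h := by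
  rw [bCoord, SemidirectProduct.mul_left, toAdd_mul, AddSubgroup.coe_add]
  exact congrArg _ (coe_phiHom_apply ha (toAdd g.right) h.left)

lemma vElt_pow_mul_uElt_zpow (d : ℕ) (m : ℤ) :
    vElt ha ^ d * uElt ha ^ m = ⟨ofAdd (d • ⟨1, one_mem_B a⟩), ofAdd m⟩ := by
  have hv : vElt ha = SemidirectProduct.inl (ofAdd ⟨1, one_mem_B a⟩) := rfl
  have hu : uElt ha = SemidirectProduct.inr (ofAdd 1) := rfl
  rw [SemidirectProduct.mk_eq_inl_mul_inr, hv, hu, ← map_pow, ← map_zpow, ← ofAdd_nsmul,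
    ← ofAdd_zsmul, zsmul_one, Int.cast_id]

def digitWord (m : ℤ) (L : List ℕ) : Gk ha := (L.map fun d => vElt ha ^ d * uElt ha ^ m).prod

lemma bCoord_digitWord (m : ℤ) (L : List ℕ) :
    bCoord ha (digitWord ha m L) = Nat.ofDigits (a ^ m) L := by
  induction L with
  | nil => rfl
  | cons d L ih =>
    rw [digitWord, List.map_cons, List.prod_cons, bCoord_mul, ← digitWord, ih,
      vElt_pow_mul_uElt_zpow]
    simp [bCoord, Nat.ofDigits]

lemma digitWord_mem_wordBall (m : ℤ) {L : List ℕ} {k : ℕ} (hL : ∀ d ∈ L, d ≤ k) :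
    digitWord ha m L ∈
      wordBall {uElt ha, (uElt ha)⁻¹, vElt ha, (vElt ha)⁻¹} (L.length * (k + m.natAbs)) := by
  rw [digitWord, ← List.length_map (fun d => vElt ha ^ d * uElt ha ^ m)]
  refine List.prod_mem_wordBall fun x hx => ?_
  obtain ⟨d, hd, rfl⟩ := List.mem_map.1 hx
  refine wordBall_mono _ (Nat.add_le_add_right (hL d hd) _) (mul_mem_wordBall ?_ ?_)
  · exact pow_mem_wordBall (by simp) d
  · exact zpow_mem_wordBall (by simp) (by simp) m

lemma two_pow_le_ncard_wordBall {m : ℤ} (hm : 2 ≤ a ^ m) (n : ℕ) :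
    (2 : ℝ) ^ (n / (m.natAbs + 1)) ≤
      (wordBall ({uElt ha, (uElt ha)⁻¹, vElt ha, (vElt ha)⁻¹} : Set (Gk ha)) n).ncard := by
  set K := n / (m.natAbs + 1)
  have hmem (ε : Fin K → Fin 2) : digitWord ha m (List.ofFn fun i => (ε i : ℕ)) ∈
      wordBall {uElt ha, (uElt ha)⁻¹, vElt ha, (vElt ha)⁻¹} n := by
    refine wordBall_mono _ ?_ (digitWord_mem_wordBall ha m (k := 1) ?_)
    · rw [List.length_ofFn, add_comm 1]
      exact Nat.div_mul_le_self n _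
    · simp only [List.mem_ofFn, forall_exists_index, forall_apply_eq_imp_iff]
      exact fun i => Nat.le_of_lt_succ (ε i).isLt
  have hinj : Function.Injective fun ε : Fin K → Fin 2 => (⟨_, hmem ε⟩ : wordBall _ n) := by
    intro ε δ h
    apply Nat.ofDigits_ofFn_injective (b := 2) (t := a ^ m) (by exact_mod_cast hm)
    dsimp only
    rw [← bCoord_digitWord ha, ← bCoord_digitWord ha]
    exact congrArg (fun g => bCoord ha g.1) h
  have := ((Set.toFinite {uElt ha, (uElt ha)⁻¹, vElt ha, (vElt ha)⁻¹}).wordBall n).to_subtype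
  have hcard := Nat.card_le_card_of_injective _ hinj
  rw [Nat.card_eq_fintype_card, Fintype.card_fun, Fintype.card_fin, Fintype.card_fin,
    Nat.card_coe_set_eq] at hcard
  exact_mod_cast hcard

end Gk

/-- the group `G_a` has exponential growth with respect to the
generating set `S = {u, u⁻¹, v, v⁻¹}`: there are `c > 1` and `C > 0` such that for
every `n`, the number of elements of `G_a` that are products of at most `n`
elements of `S` is at least `C·cⁿ`. -/
theorem Gk_exponential_growth (a : ℝ) (ha : 0 < a) (hne : a ≠ 1) :
    ∃ c : ℝ, 1 < c ∧ ∃ C : ℝ, 0 < C ∧ ∀ n : ℕ,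
      C * c ^ n ≤
        ({g : Gk ha | ∃ l : List (Gk ha), l.length ≤ n ∧
            (∀ x ∈ l, x ∈ ({uElt ha, (uElt ha)⁻¹, vElt ha, (vElt ha)⁻¹} : Set (Gk ha))) ∧
            l.prod = g}.ncard : ℝ) := by
  obtain ⟨m, hm⟩ := exists_le_zpow_of_ne_one ha hne 2
  exact exists_pow_le_of_pow_div_le one_lt_two m.natAbs.succ_pos
    (two_pow_le_ncard_wordBall ha hm)
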